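/- Let A, B ⊂ B(H) be C*-algebras with A ⊆_γ B for some γ > 0, and suppose A has length at most ℓ with length constant at most K. Then for all n ∈ ℕ, A ⊗ M_n ⊆_μ B ⊗ M_n where μ = K((1+γ)^ℓ − 1). -/

import Mathlib

/-- The near inclusion `A ⊆_γ B`: every element of the closed unit ball of `A` lies within
distance `γ` of some element of `B`. -/
def nearIncl {E : Type*} [NormedRing E] (A B : Set E) (γ : ℝ) : Prop :=
  ∀ x ∈ A, ‖x‖ ≤ 1 → ∃ y ∈ B, ‖x - y‖ ≤ γ

/-- The Kadison–Kastler distance between two subsets of a C*-algebra: the infimum of all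
`γ > 0` such that each element of the unit ball of either set is within `γ` of an element
of the unit ball of the other. -/
noncomputable def kkDist {E : Type*} [NormedRing E] (A B : Set E) : ℝ :=
  sInf {γ : ℝ | 0 < γ ∧
    (∀ x ∈ A, ‖x‖ ≤ 1 → ∃ y ∈ B, ‖y‖ ≤ 1 ∧ ‖x - y‖ < γ) ∧
    (∀ y ∈ B, ‖y‖ ≤ 1 → ∃ x ∈ A, ‖x‖ ≤ 1 ∧ ‖y - x‖ < γ)}

/-- The bounded operator on the Hilbert space `ℓ²`-direct sum `H ⊕ ⋯ ⊕ H` associated to an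
`n × n` matrix of bounded operators on `H`. -/
noncomputable def matCLM {H : Type*} [NormedAddCommGroup H] [InnerProductSpace ℂ H]
    [CompleteSpace H] {n : ℕ} (x : Matrix (Fin n) (Fin n) (H →L[ℂ] H)) :
    (PiLp 2 fun _ : Fin n => H) →L[ℂ] (PiLp 2 fun _ : Fin n => H) :=
  ((PiLp.continuousLinearEquiv 2 ℂ fun _ : Fin n => H).symm.toContinuousLinearMap) ∘L
    (ContinuousLinearMap.pi fun i => ∑ j, (x i j) ∘L (ContinuousLinearMap.proj j)) ∘L
    ((PiLp.continuousLinearEquiv 2 ℂ fun _ : Fin n => H).toContinuousLinearMap)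

/-- The C*-norm of a matrix of bounded operators, i.e. the operator norm of its action on the
`ℓ²`-direct sum. -/
noncomputable def matNorm {H : Type*} [NormedAddCommGroup H] [InnerProductSpace ℂ H]
    [CompleteSpace H] {n : ℕ} (x : Matrix (Fin n) (Fin n) (H →L[ℂ] H)) : ℝ :=
  ‖matCLM x‖

/-- Pad an `n × n` matrix to an `N × N` matrix by filling with zeros. -/
def padMat {E : Type*} [Zero E] {n N : ℕ} (x : Matrix (Fin n) (Fin n) E) :
    Matrix (Fin N) (Fin N) E :=
  Matrix.of fun i j => if h : (i : ℕ) < n ∧ (j : ℕ) < n then x ⟨i, h.1⟩ ⟨j, h.2⟩ else 0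

/-- A (concretely represented) C*-algebra `A ⊆ B(H)` has length at most `ℓ` with length
constant at most `K`: every matrix `x` over `A` factors as
`x = λ₀ d₁ λ₁ ⋯ d_ℓ λ_ℓ` with the `λ`'s scalar matrices, the `d`'s diagonal matrices over `A`,
and `(∏ ‖λᵢ‖)(∏ ‖dᵢ‖) ≤ K ‖x‖` (rectangular scalar matrices are padded to square ones). -/
def LengthLE {H : Type*} [NormedAddCommGroup H] [InnerProductSpace ℂ H] [CompleteSpace H]
    (A : StarSubalgebra ℂ (H →L[ℂ] H)) (ℓ : ℕ) (K : ℝ) : Prop :=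
  ∀ (n : ℕ) (x : Matrix (Fin n) (Fin n) (H →L[ℂ] H)), (∀ i j, x i j ∈ A) →
    ∃ N : ℕ, n ≤ N ∧
    ∃ (lam : Fin (ℓ + 1) → Matrix (Fin N) (Fin N) (H →L[ℂ] H))
      (d : Fin ℓ → Fin N → (H →L[ℂ] H)),
      (∀ k i j, ∃ c : ℂ, lam k i j = c • (1 : H →L[ℂ] H)) ∧
      (∀ i j, d i j ∈ A) ∧
      ((List.finRange ℓ).map fun i => lam i.castSucc * Matrix.diagonal (d i)).prod *
          lam (Fin.last ℓ) = padMat x ∧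
      (∏ k, matNorm (lam k)) * (∏ i, matNorm (Matrix.diagonal (d i))) ≤ K * matNorm x

/-!
Pad `x` and factor it as `λ₀ d₁ λ₁ ⋯ d_ℓ λ_ℓ`. Rescaling the near inclusion replaces every
entry `a` of every diagonal `dᵢ` by some `b ∈ B` with `‖a - b‖ ≤ γ ‖a‖`, hence `dᵢ` by a diagonal
`bᵢ` over `B` with `‖dᵢ - bᵢ‖ ≤ γ ‖dᵢ‖`. The product `λ₀ b₁ λ₁ ⋯ b_ℓ λ_ℓ` has entries in `B`
(scalars are absorbed and `ℓ ≥ 1`), and telescoping gives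
`‖∏ fᵢ - ∏ gᵢ‖ ≤ (∏ ‖fᵢ‖)((1 + γ)^ℓ - 1)` whenever `‖fᵢ - gᵢ‖ ≤ γ ‖fᵢ‖`, so the error is at most
`(∏ ‖λᵢ‖)(∏ ‖dᵢ‖)((1 + γ)^ℓ - 1) ≤ K ((1 + γ)^ℓ - 1)`. Compressing to the top-left `n × n`
corner does not increase the norm.
-/

section Telescoping

/- The trailing factor `z` keeps these bounds free of `‖1‖ ≤ 1`, which fails in the
operator algebra of the zero space. -/

variable {E ι : Type*} [SeminormedRing E]

theorem norm_list_prod_map_mul_le (g : ι → E) (c : ι → ℝ) (hg : ∀ i, ‖g i‖ ≤ c i) (z : E) :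
    ∀ L : List ι, ‖(L.map g).prod * z‖ ≤ (L.map c).prod * ‖z‖
  | [] => by simp
  | i :: L => by
    simp only [List.map_cons, List.prod_cons, mul_assoc]
    exact (norm_mul_le _ _).trans <| mul_le_mul (hg i) (norm_list_prod_map_mul_le g c hg z L)
      (norm_nonneg _) ((norm_nonneg _).trans (hg i))

theorem norm_list_prod_map_mul_sub_le {γ : ℝ} (hγ : 0 ≤ γ) (f g : ι → E) (a : ι → ℝ)
    (hf : ∀ i, ‖f i‖ ≤ a i) (hfg : ∀ i, ‖f i - g i‖ ≤ γ * a i) (z : E) :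
    ∀ L : List ι, ‖(L.map f).prod * z - (L.map g).prod * z‖ ≤
      (L.map a).prod * ((1 + γ) ^ L.length - 1) * ‖z‖
  | [] => by simp
  | i :: L => by
    have hg : ∀ i, ‖g i‖ ≤ (1 + γ) * a i := fun i =>
      calc ‖g i‖ ≤ ‖f i‖ + ‖f i - g i‖ := norm_le_norm_add_norm_sub _ _
        _ ≤ (1 + γ) * a i := by linarith [hf i, hfg i]
    have hQ : ‖(L.map g).prod * z‖ ≤ (1 + γ) ^ L.length * (L.map a).prod * ‖z‖ := by
      simpa [List.prod_map_mul] using norm_list_prod_map_mul_le g _ hg z L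
    have hP := norm_list_prod_map_mul_sub_le hγ f g a hf hfg z L
    have ha : 0 ≤ a i := (norm_nonneg _).trans (hf i)
    simp only [List.map_cons, List.prod_cons, List.length_cons, mul_assoc]
    calc ‖f i * ((L.map f).prod * z) - g i * ((L.map g).prod * z)‖
        = ‖f i * ((L.map f).prod * z - (L.map g).prod * z) +
            (f i - g i) * ((L.map g).prod * z)‖ := by noncomm_ring
      _ ≤ a i * ((L.map a).prod * ((1 + γ) ^ L.length - 1) * ‖z‖) +
            γ * a i * ((1 + γ) ^ L.length * (L.map a).prod * ‖z‖) :=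
          (norm_add_le _ _).trans <| add_le_add
            ((norm_mul_le _ _).trans (mul_le_mul (hf i) hP (norm_nonneg _) ha))
            ((norm_mul_le _ _).trans (mul_le_mul (hfg i) hQ (norm_nonneg _) (by positivity)))
      _ = a i * ((L.map a).prod * (((1 + γ) ^ (L.length + 1) - 1) * ‖z‖)) := by ring

end Telescoping

section PiLpEmbedding

variable {ι κ : Type*} [Fintype ι] [Fintype κ]

theorem Fintype.sum_extend_zero {M N : Type*} [Zero M] [AddCommMonoid N] (e : ι ↪ κ)
    (v : ι → M) (F : κ → M → N) (hF : ∀ k, F k 0 = 0) :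
    ∑ k, F k (Function.extend e v 0 k) = ∑ i, F (e i) (v i) := by
  rw [← Finset.sum_subset (Finset.subset_univ (Finset.univ.map e)) fun k _ hk => ?_,
    Finset.sum_map]
  · simp [e.injective.extend_apply]
  · rw [Function.extend_apply' _ _ _ (by simpa using hk), Pi.zero_apply, hF]

variable {E : Type*} [NormedAddCommGroup E]

theorem PiLp.norm_toLp_comp_le (e : ι ↪ κ) (w : PiLp 2 fun _ : κ => E) :
    ‖WithLp.toLp 2 (fun i => w (e i))‖ ≤ ‖w‖ := by
  rw [← pow_le_pow_iff_left₀ (norm_nonneg _) (norm_nonneg _) two_ne_zero,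
    PiLp.norm_sq_eq_of_L2, PiLp.norm_sq_eq_of_L2]
  calc ∑ i, ‖w (e i)‖ ^ 2 = ∑ k ∈ Finset.univ.map e, ‖w k‖ ^ 2 := by rw [Finset.sum_map]
    _ ≤ ∑ k, ‖w k‖ ^ 2 := Finset.sum_le_univ_sum_of_nonneg fun _ => by positivity

theorem PiLp.norm_toLp_extend_zero (e : ι ↪ κ) (v : PiLp 2 fun _ : ι => E) :
    ‖WithLp.toLp 2 (Function.extend e v 0)‖ = ‖v‖ := by
  rw [← sq_eq_sq₀ (norm_nonneg _) (norm_nonneg _), PiLp.norm_sq_eq_of_L2, PiLp.norm_sq_eq_of_L2]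
  exact Fintype.sum_extend_zero e v (fun _ m => ‖m‖ ^ 2) fun _ => by simp

end PiLpEmbedding

section MatrixOperator

variable {H : Type*} [NormedAddCommGroup H] [InnerProductSpace ℂ H] [CompleteSpace H] {n : ℕ}

theorem matCLM_apply (x : Matrix (Fin n) (Fin n) (H →L[ℂ] H)) (v : PiLp 2 fun _ : Fin n => H)
    (i : Fin n) : matCLM x v i = ∑ j, x i j (v j) := by
  simp [matCLM]

theorem matCLM_diagonal_apply (e : Fin n → H →L[ℂ] H) (v : PiLp 2 fun _ : Fin n => H)
    (i : Fin n) : matCLM (Matrix.diagonal e) v i = e i (v i) := by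
  rw [matCLM_apply, Finset.sum_eq_single i (fun j _ hj => by simp [hj.symm]) (by simp)]
  simp

variable (H n) in
noncomputable def matCLMRingHom :
    Matrix (Fin n) (Fin n) (H →L[ℂ] H) →+*
      (PiLp 2 fun _ : Fin n => H) →L[ℂ] (PiLp 2 fun _ : Fin n => H) where
  toFun := matCLM
  map_one' := by ext v i; simp [← Matrix.diagonal_one, matCLM_diagonal_apply]
  map_mul' x y := by
    ext v i
    simp only [mul_apply_eq_comp, matCLM_apply, Matrix.mul_apply, sum_apply, map_sum]
    exact Finset.sum_comm
  map_zero' := by ext v i; simp [matCLM_apply]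
  map_add' x y := by ext v i; simp [matCLM_apply, Finset.sum_add_distrib]

@[simp]
theorem matCLMRingHom_apply (x : Matrix (Fin n) (Fin n) (H →L[ℂ] H)) :
    matCLMRingHom H n x = matCLM x := rfl

theorem matNorm_mul_le (x y : Matrix (Fin n) (Fin n) (H →L[ℂ] H)) :
    matNorm (x * y) ≤ matNorm x * matNorm y := by
  rw [matNorm, ← matCLMRingHom_apply, map_mul]
  exact norm_mul_le _ _

theorem matNorm_diagonal_le {e : Fin n → H →L[ℂ] H} {c : ℝ} (hc : 0 ≤ c)
    (he : ∀ j, ‖e j‖ ≤ c) : matNorm (Matrix.diagonal e) ≤ c := by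
  refine ContinuousLinearMap.opNorm_le_bound _ hc fun v => ?_
  rw [← pow_le_pow_iff_left₀ (norm_nonneg _) (by positivity) two_ne_zero, mul_pow,
    PiLp.norm_sq_eq_of_L2, PiLp.norm_sq_eq_of_L2, Finset.mul_sum]
  refine Finset.sum_le_sum fun i _ => ?_
  rw [matCLM_diagonal_apply, ← mul_pow]
  gcongr
  exact (e i).le_of_opNorm_le (he i) _

theorem norm_le_matNorm_diagonal (e : Fin n → H →L[ℂ] H) (j : Fin n) :
    ‖e j‖ ≤ matNorm (Matrix.diagonal e) := by
  refine ContinuousLinearMap.opNorm_le_bound _ (norm_nonneg _) fun u => ?_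
  calc ‖e j u‖ = ‖matCLM (Matrix.diagonal e) (PiLp.single 2 j u) j‖ := by
        rw [matCLM_diagonal_apply, PiLp.single_eq_same]
    _ ≤ ‖matCLM (Matrix.diagonal e) (PiLp.single 2 j u)‖ := PiLp.norm_apply_le _ _
    _ ≤ matNorm (Matrix.diagonal e) * ‖u‖ := by
        simpa [matNorm, PiLp.norm_single] using
          (matCLM (Matrix.diagonal e)).le_opNorm (PiLp.single 2 j u)

theorem matNorm_submatrix_le {N : ℕ} (e : Fin n ↪ Fin N)
    (x : Matrix (Fin N) (Fin N) (H →L[ℂ] H)) :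
    matNorm (x.submatrix e e) ≤ matNorm x := by
  refine ContinuousLinearMap.opNorm_le_bound _ (norm_nonneg _) fun v => ?_
  set V : PiLp 2 (fun _ : Fin N => H) := WithLp.toLp 2 (Function.extend e v 0)
  have hcomp : matCLM (x.submatrix e e) v = WithLp.toLp 2 (fun i => matCLM x V (e i)) := by
    ext i
    rw [matCLM_apply, matCLM_apply]
    exact (Fintype.sum_extend_zero e v (fun k m => x (e i) k m) fun _ => map_zero _).symm
  calc ‖matCLM (x.submatrix e e) v‖ ≤ ‖matCLM x V‖ := hcomp ▸ PiLp.norm_toLp_comp_le e _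
    _ ≤ matNorm x * ‖V‖ := (matCLM x).le_opNorm V
    _ = matNorm x * ‖v‖ := by rw [PiLp.norm_toLp_extend_zero]

end MatrixOperator

/-- `λ₀ d₁ λ₁ ⋯ d_ℓ λ_ℓ`, the shape of the factorizations in `LengthLE`. -/
def Matrix.interleavedProd {m R : Type*} [Fintype m] [DecidableEq m] [Semiring R] {ℓ : ℕ}
    (lam : Fin (ℓ + 1) → Matrix m m R) (d : Fin ℓ → m → R) : Matrix m m R :=
  ((List.finRange ℓ).map fun i => lam i.castSucc * Matrix.diagonal (d i)).prod * lam (Fin.last ℓ)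

section EntriesMem

variable {𝕜 R S m : Type*} [CommSemiring 𝕜] [Semiring R] [Algebra 𝕜 R] [SetLike S R] (B : S)
  [Fintype m]

theorem Matrix.mul_scalar_apply_mem [AddSubmonoidClass S R] [SMulMemClass S 𝕜 R]
    {M Λ : Matrix m m R} (hM : ∀ i j, M i j ∈ B) (hΛ : ∀ i j, ∃ c : 𝕜, Λ i j = c • 1)
    (i j : m) : (M * Λ) i j ∈ B := by
  rw [Matrix.mul_apply]
  refine sum_mem fun k _ => ?_
  obtain ⟨c, hc⟩ := hΛ k j
  rw [hc, mul_smul_one]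
  exact SMulMemClass.smul_mem c (hM i k)

theorem Matrix.scalar_mul_diagonal_apply_mem [DecidableEq m] [SMulMemClass S 𝕜 R]
    {Λ : Matrix m m R} {b : m → R} (hΛ : ∀ i j, ∃ c : 𝕜, Λ i j = c • 1) (hb : ∀ j, b j ∈ B)
    (i j : m) : (Λ * Matrix.diagonal b) i j ∈ B := by
  obtain ⟨c, hc⟩ := hΛ i j
  rw [Matrix.mul_diagonal, hc, smul_one_mul]
  exact SMulMemClass.smul_mem c (hb j)

theorem Matrix.list_prod_apply_mem_of_ne_nil [DecidableEq m] [NonUnitalSubsemiringClass S R] :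
    ∀ L : List (Matrix m m R), L ≠ [] → (∀ M ∈ L, ∀ i j, M i j ∈ B) → ∀ i j, L.prod i j ∈ B
  | [], h, _ => absurd rfl h
  | [M], _, hL => by simpa using hL M (by simp)
  | M :: M' :: L, _, hL => fun i j =>
    sum_mem fun k _ => mul_mem (hL M (by simp) i k)
      (Matrix.list_prod_apply_mem_of_ne_nil (M' :: L) (by simp)
        (fun P hP => hL P (by simp [hP])) k j)

theorem Matrix.interleavedProd_apply_mem [DecidableEq m] [NonUnitalSubsemiringClass S R]
    [SMulMemClass S 𝕜 R] {ℓ : ℕ} (hℓ : 1 ≤ ℓ) {lam : Fin (ℓ + 1) → Matrix m m R}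
    {b : Fin ℓ → m → R} (hlam : ∀ k i j, ∃ c : 𝕜, lam k i j = c • 1) (hb : ∀ k j, b k j ∈ B)
    (i j : m) : Matrix.interleavedProd lam b i j ∈ B := by
  refine Matrix.mul_scalar_apply_mem B
    (Matrix.list_prod_apply_mem_of_ne_nil B _ ?_ ?_) (hlam _) i j
  · simpa [List.finRange_eq_nil_iff] using Nat.one_le_iff_ne_zero.mp hℓ
  · simp only [List.mem_map, List.mem_finRange, true_and, forall_exists_index]
    rintro _ k rfl
    exact Matrix.scalar_mul_diagonal_apply_mem B (hlam _) (hb k)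

end EntriesMem

section Perturbation

variable {H : Type*} [NormedAddCommGroup H] [InnerProductSpace ℂ H] [CompleteSpace H] {N ℓ : ℕ}

theorem matNorm_diagonal_sub_le {γ : ℝ} (hγ : 0 ≤ γ) {d b : Fin N → H →L[ℂ] H}
    (hdb : ∀ j, ‖d j - b j‖ ≤ γ * ‖d j‖) :
    matNorm (Matrix.diagonal d - Matrix.diagonal b) ≤ γ * matNorm (Matrix.diagonal d) := by
  rw [Matrix.diagonal_sub]
  refine matNorm_diagonal_le (mul_nonneg hγ (norm_nonneg _)) fun j => (hdb j).trans ?_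
  gcongr
  exact norm_le_matNorm_diagonal d j

theorem matNorm_interleavedProd_sub_le {γ : ℝ} (hγ : 0 ≤ γ)
    (lam : Fin (ℓ + 1) → Matrix (Fin N) (Fin N) (H →L[ℂ] H)) {d b : Fin ℓ → Fin N → H →L[ℂ] H}
    (hdb : ∀ k j, ‖d k j - b k j‖ ≤ γ * ‖d k j‖) :
    matNorm (Matrix.interleavedProd lam d - Matrix.interleavedProd lam b) ≤
      (∏ k, matNorm (lam k)) * (∏ k, matNorm (Matrix.diagonal (d k))) * ((1 + γ) ^ ℓ - 1) := by
  set φ := matCLMRingHom H N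
  have hφ (c : Fin ℓ → Fin N → H →L[ℂ] H) : φ (Matrix.interleavedProd lam c) =
      ((List.finRange ℓ).map fun k => φ (lam k.castSucc * Matrix.diagonal (c k))).prod *
        φ (lam (Fin.last ℓ)) := by
    rw [Matrix.interleavedProd, map_mul, map_list_prod, List.map_map]
    rfl
  have key := norm_list_prod_map_mul_sub_le hγ
    (fun k => φ (lam k.castSucc * Matrix.diagonal (d k)))
    (fun k => φ (lam k.castSucc * Matrix.diagonal (b k)))
    (fun k => matNorm (lam k.castSucc) * matNorm (Matrix.diagonal (d k)))
    (fun k => matNorm_mul_le _ _)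
    (fun k => by
      rw [← map_sub, ← mul_sub, mul_left_comm]
      exact (matNorm_mul_le _ (_ - _)).trans
        (mul_le_mul_of_nonneg_left (matNorm_diagonal_sub_le hγ (hdb k)) (norm_nonneg _)))
    (φ (lam (Fin.last ℓ))) (List.finRange ℓ)
  rw [← hφ, ← hφ, ← map_sub, ← Fin.prod_univ_def, Finset.prod_mul_distrib,
    List.length_finRange] at key
  change matNorm _ ≤ _ * matNorm (lam (Fin.last ℓ)) at key
  rw [Fin.prod_univ_castSucc]
  exact key.trans_eq (by ring)

end Perturbation

theorem nearIncl.exists_mem_norm_sub_le {𝕜 E SA SB : Type*} [RCLike 𝕜] [NormedRing E]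
    [NormedSpace 𝕜 E] [SetLike SA E] [SMulMemClass SA 𝕜 E] [SetLike SB E] [SMulMemClass SB 𝕜 E]
    {A : SA} {B : SB} {γ : ℝ} (hAB : nearIncl (A : Set E) (B : Set E) γ) {a : E} (ha : a ∈ A) :
    ∃ b ∈ B, ‖a - b‖ ≤ γ * ‖a‖ := by
  set r : 𝕜 := (‖a‖ : 𝕜)
  have hr : ‖r‖ = ‖a‖ := by simp [r]
  have har : r • r⁻¹ • a = a := by
    rcases eq_or_ne a 0 with rfl | h
    · simp
    · exact smul_inv_smul₀ (by simpa [r] using h) a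
  obtain ⟨b, hb, hab⟩ := hAB (r⁻¹ • a) (SMulMemClass.smul_mem _ ha)
    (by rw [norm_smul, norm_inv, hr]; exact inv_mul_le_one_of_le₀ le_rfl (norm_nonneg a))
  refine ⟨r • b, SMulMemClass.smul_mem _ hb, ?_⟩
  calc ‖a - r • b‖ = ‖a‖ * ‖r⁻¹ • a - b‖ := by rw [← hr, ← norm_smul, smul_sub, har]
    _ ≤ γ * ‖a‖ := by rw [mul_comm]; gcongr

theorem padMat_submatrix_castLE {E : Type*} [Zero E] {n N : ℕ} (h : n ≤ N)
    (x : Matrix (Fin n) (Fin n) E) :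
    (padMat x : Matrix (Fin N) (Fin N) E).submatrix (Fin.castLE h) (Fin.castLE h) = x := by
  ext i j
  simp [padMat]

/-- Proposition 2.9: if `A ⊆_γ B` and `A` has length at most `ℓ` with length constant at
most `K`, then `A ⊗ M_n ⊆_μ B ⊗ M_n` for all `n`, where `μ = K((1+γ)^ℓ - 1)`. -/
theorem matrix_nearIncl_of_lengthLE {H : Type*} [NormedAddCommGroup H]
    [InnerProductSpace ℂ H] [CompleteSpace H]
    (A : StarSubalgebra ℂ (H →L[ℂ] H)) (B : NonUnitalStarSubalgebra ℂ (H →L[ℂ] H))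
    (γ : ℝ) (hγ : 0 < γ) (ℓ : ℕ) (K : ℝ) (hℓ : 1 ≤ ℓ) (hK : 1 ≤ K)
    (hAB : nearIncl (A : Set (H →L[ℂ] H)) (B : Set (H →L[ℂ] H)) γ)
    (hlen : LengthLE A ℓ K) :
    ∀ (n : ℕ) (x : Matrix (Fin n) (Fin n) (H →L[ℂ] H)), (∀ i j, x i j ∈ A) →
      matNorm x ≤ 1 →
      ∃ y : Matrix (Fin n) (Fin n) (H →L[ℂ] H), (∀ i j, y i j ∈ B) ∧
        matNorm (x - y) ≤ K * ((1 + γ) ^ ℓ - 1) := by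
  intro n x hxA hx1
  obtain ⟨N, hnN, lam, d, hlam, hd, hfac : Matrix.interleavedProd lam d = padMat x, hbound⟩ :=
    hlen n x hxA
  choose b hbB hdb using fun k j => hAB.exists_mem_norm_sub_le (𝕜 := ℂ) (hd k j)
  let e := Fin.castLEEmb hnN
  refine ⟨(Matrix.interleavedProd lam b).submatrix e e,
    fun i j => Matrix.interleavedProd_apply_mem B hℓ hlam hbB _ _, ?_⟩
  have hc : 0 ≤ (1 + γ) ^ ℓ - 1 := sub_nonneg.2 (one_le_pow₀ (by linarith))
  calc matNorm (x - (Matrix.interleavedProd lam b).submatrix e e)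
      = matNorm ((Matrix.interleavedProd lam d - Matrix.interleavedProd lam b).submatrix e e) := by
        rw [hfac, Matrix.submatrix_sub, Pi.sub_apply, Pi.sub_apply, Fin.coe_castLEEmb,
          padMat_submatrix_castLE]
    _ ≤ (∏ k, matNorm (lam k)) * (∏ k, matNorm (Matrix.diagonal (d k))) * ((1 + γ) ^ ℓ - 1) :=
        (matNorm_submatrix_le e _).trans (matNorm_interleavedProd_sub_le hγ.le lam hdb)
    _ ≤ K * 1 * ((1 + γ) ^ ℓ - 1) :=
        mul_le_mul_of_nonneg_right (hbound.trans (mul_le_mul_of_nonneg_left hx1 (by linarith))) hc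
    _ = K * ((1 + γ) ^ ℓ - 1) := by ring
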